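/- A nilpotent group G has property (NL) if and only if every group homomorphism from G to the additive group ℝ is trivial. -/

import Mathlib

noncomputable section

open Metric

/-- The Gromov product of `x` and `y` at `w` with respect to a distance function `d`. -/
def gromovProd {α : Type*} (d : α → α → ℝ) (w x y : α) : ℝ :=
  (d w x + d w y - d x y) / 2

/-- Gromov hyperbolicity via the four-point condition, for an arbitrary distance function. -/
def FourPointHyperbolic {α : Type*} (d : α → α → ℝ) : Prop :=
  ∃ δ : ℝ, 0 ≤ δ ∧ ∀ w x y z : α,
    min (gromovProd d w x z) (gromovProd d w z y) - δ ≤ gromovProd d w x y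

/-- A geodesic from `x` to `y`, parametrized by arc length on `[0, dist x y]`. -/
def IsGeodesicSeg {X : Type*} [MetricSpace X] (x y : X) (f : ℝ → X) : Prop :=
  f 0 = x ∧ f (dist x y) = y ∧
    ∀ s ∈ Set.Icc (0 : ℝ) (dist x y), ∀ t ∈ Set.Icc (0 : ℝ) (dist x y),
      dist (f s) (f t) = |s - t|

/-- A geodesic metric space: any two points are joined by a geodesic. -/
def GeodesicSpace (X : Type*) [MetricSpace X] : Prop :=
  ∀ x y : X, ∃ f : ℝ → X, IsGeodesicSeg x y f

/-- The image (as a set) of a geodesic segment from `x` to `y`. -/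
def geodSet {X : Type*} [MetricSpace X] (x y : X) (f : ℝ → X) : Set X :=
  f '' Set.Icc (0 : ℝ) (dist x y)

/-- `p` lies within distance `δ` of the set `S` (i.e. in the closed `δ`-neighborhood). -/
def WithinDistOf {X : Type*} [MetricSpace X] (δ : ℝ) (p : X) (S : Set X) : Prop :=
  ∃ q ∈ S, dist p q ≤ δ

/-- Rips condition: each side of every geodesic triangle is contained in the union of the
closed `δ`-neighborhoods of the other two sides. -/
def RipsHyperbolic (X : Type*) [MetricSpace X] (δ : ℝ) : Prop :=
  ∀ x y z : X, ∀ fxy fyz fxz : ℝ → X,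
    IsGeodesicSeg x y fxy → IsGeodesicSeg y z fyz → IsGeodesicSeg x z fxz →
      (∀ p ∈ geodSet x y fxy, WithinDistOf δ p (geodSet y z fyz ∪ geodSet x z fxz)) ∧
      (∀ p ∈ geodSet y z fyz, WithinDistOf δ p (geodSet x y fxy ∪ geodSet x z fxz)) ∧
      (∀ p ∈ geodSet x z fxz, WithinDistOf δ p (geodSet x y fxy ∪ geodSet y z fyz))

/-- An (isometric) action of a group `G` on a metric space `X`. -/
structure IsIsomAction (G : Type*) [Group G] (X : Type*) [MetricSpace X]
    (act : G → X → X) : Prop where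
  act_one : ∀ x : X, act 1 x = x
  act_mul : ∀ (g h : G) (x : X), act (g * h) x = act g (act h x)
  isometry : ∀ (g : G) (x y : X), dist (act g x) (act g y) = dist x y

/-- A cobounded action: some (hence any) orbit is coarsely dense. -/
def CoboundedAction {G X : Type*} [Group G] [MetricSpace X] (act : G → X → X) : Prop :=
  ∃ (x : X) (R : ℝ), 0 ≤ R ∧ ∀ y : X, ∃ g : G, dist y (act g x) ≤ R

/-- A quasi-isometric embedding between two "spaces" given by distance functions. -/
def IsQIEmbWith {α β : Type*} (dα : α → α → ℝ) (dβ : β → β → ℝ) (f : α → β) : Prop :=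
  ∃ A B : ℝ, 1 ≤ A ∧ 0 ≤ B ∧ ∀ x y : α,
    dα x y / A - B ≤ dβ (f x) (f y) ∧ dβ (f x) (f y) ≤ A * dα x y + B

/-- The image of `f` is coarsely dense. -/
def CoarselyDenseWith {α β : Type*} (dβ : β → β → ℝ) (f : α → β) : Prop :=
  ∃ C : ℝ, 0 ≤ C ∧ ∀ y : β, ∃ x : α, dβ (f x) y ≤ C

/-- A quasi-isometry between two "spaces" given by distance functions. -/
def IsQuasiIsometryWith {α β : Type*} (dα : α → α → ℝ) (dβ : β → β → ℝ) (f : α → β) : Prop :=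
  IsQIEmbWith dα dβ f ∧ CoarselyDenseWith dβ f

/-- The standard distance on `ℤ`. -/
def zdist : ℤ → ℤ → ℝ := fun m n => |(m : ℝ) - (n : ℝ)|

/-- `g` is loxodromic for the action `act`: for some basepoint `x`, the orbit map
`n ↦ g ^ n • x` is a quasi-isometric embedding of `ℤ`. -/
def LoxodromicWith {G α : Type*} [Group G] (d : α → α → ℝ) (act : G → α → α) (g : G) : Prop :=
  ∃ x : α, IsQIEmbWith zdist d (fun n : ℤ => act (g ^ n) x)

/-- Acylindricity of an action, with respect to a distance function. -/
def AcylindricalWith {G α : Type*} (d : α → α → ℝ) (act : G → α → α) : Prop :=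
  ∀ ε : ℝ, 0 < ε → ∃ (R : ℝ) (N : ℕ), 0 ≤ R ∧ ∀ x y : α, R ≤ d x y →
    {g : G | d x (act g x) ≤ ε ∧ d y (act g y) ≤ ε}.Finite ∧
    Nat.card {g : G | d x (act g x) ≤ ε ∧ d y (act g y) ≤ ε} ≤ N

/-- Two subsets are within finite Hausdorff distance of each other. -/
def FinHausdorffClose {α : Type*} (d : α → α → ℝ) (A B : Set α) : Prop :=
  ∃ C : ℝ, (∀ a ∈ A, ∃ b ∈ B, d a b ≤ C) ∧ (∀ b ∈ B, ∃ a ∈ A, d a b ≤ C)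

/-- The positive (`pos = true`) or negative (`pos = false`) orbit ray of `g` at `x`. -/
def orbitRay {G α : Type*} [Group G] (act : G → α → α) (g : G) (x : α) (pos : Bool) : Set α :=
  Set.range fun n : ℕ => act (g ^ (if pos then (n : ℤ) else -(n : ℤ))) x

/-- Independence of two loxodromic elements with respect to the basepoint `x`: no orbit ray of
`g` is within finite Hausdorff distance of an orbit ray of `h`. -/
def IndepWith {G α : Type*} [Group G] (d : α → α → ℝ) (act : G → α → α) (x : α)
    (g h : G) : Prop :=
  ∀ s t : Bool, ¬ FinHausdorffClose d (orbitRay act g x s) (orbitRay act h x t)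

/-- A group is virtually cyclic if it has a cyclic subgroup of finite index. -/
def VirtuallyCyclic (G : Type*) [Group G] : Prop :=
  ∃ H : Subgroup G, IsCyclic ↥H ∧ H.FiniteIndex

/-- `S` is a generating set of `G`. -/
def IsGenSet {G : Type*} [Group G] (S : Set G) : Prop :=
  Subgroup.closure S = ⊤

/-- The word length of `g` with respect to `S`: the least `n` such that `g` is a product of
`n` elements of `S ∪ S⁻¹`. -/
def wordLength {G : Type*} [Group G] (S : Set G) (g : G) : ℕ :=
  sInf {n : ℕ | ∃ l : List G, l.length = n ∧ (∀ s ∈ l, s ∈ S ∨ s⁻¹ ∈ S) ∧ l.prod = g}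

/-- The word metric `d_S(g,h) = ‖g⁻¹h‖_S` on `G`. -/
def wordDist {G : Type*} [Group G] (S : Set G) : G → G → ℝ :=
  fun g h => (wordLength S (g⁻¹ * h) : ℝ)

/-- `S ⪯ T` : `S` is dominated by `T`, i.e. `sup_{t ∈ T} ‖t‖_S < ∞`. -/
def GenSetDominated {G : Type*} [Group G] (S T : Set G) : Prop :=
  ∃ M : ℕ, ∀ t ∈ T, wordLength S t ≤ M

/-- Equivalence of generating sets: mutual domination. -/
def GenSetEquiv {G : Type*} [Group G] (S T : Set G) : Prop :=
  GenSetDominated S T ∧ GenSetDominated T S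

/-- The left multiplication action of a group on itself. -/
def leftTranslation {G : Type*} [Group G] : G → G → G := fun g x => g * x

universe uX uG

/-- A bundled isometric action of `G` on a geodesic, δ-hyperbolic (Rips condition)
metric space. -/
structure GrpActHypSpace (G : Type uG) [Group G] : Type (max uG (uX + 1)) where
  carrier : Type uX
  [inst : MetricSpace carrier]
  act : G → carrier → carrier
  isIsomAction : IsIsomAction G carrier act
  δ : ℝ
  δ_nonneg : 0 ≤ δ
  geodesic : GeodesicSpace carrier
  rips : RipsHyperbolic carrier δ

attribute [instance] GrpActHypSpace.inst

/-- Property (NL): no isometric action of `G` on a geodesic Gromov-hyperbolic metric space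
has a loxodromic element. -/
def PropNL (G : Type uG) [Group G] : Prop :=
  ∀ A : GrpActHypSpace.{uX, uG} G, ∀ g : G,
    ¬ LoxodromicWith (fun a b : A.carrier => dist a b) A.act g

/-!
A homomorphism `φ : G →* Multiplicative ℝ` lets `G` act on the line by translations, and every `g`
with `φ g ≠ 1` is then loxodromic. Conversely, if all such homomorphisms are trivial, the
abelianization of `G` is torsion, since `ℝ` is divisible and a homomorphism from an infinite cyclic
subgroup extends. For nilpotent `G` this makes `G` itself torsion: by induction on the class,
`G` is torsion modulo the last nontrivial term `γ` of its lower central series, and `γ` is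
generated by central commutators `⁅x, y⁆`, which satisfy `⁅x, y⁆ ^ k = ⁅x ^ k, y⁆ = 1` as soon as
`x ^ k ∈ γ`. An element of finite order has a periodic orbit, so it is never loxodromic.
-/

open scoped commutatorElement

universe u

section Torsion

variable {G : Type*} [Group G]

theorem commutatorElement_pow_left {x y : G} (h : Commute x ⁅x, y⁆) (n : ℕ) :
    ⁅x ^ n, y⁆ = ⁅x, y⁆ ^ n := by
  induction n with
  | zero => simp
  | succ n ih =>
    rw [pow_succ', commutatorElement_mul_left_eq_conj_mul, ih, (h.pow_right n).eq,
      mul_inv_cancel_right, pow_succ]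

theorem isOfFinOrder_of_mem_commutator_top {H : Subgroup G}
    (hcen : ⁅H, (⊤ : Subgroup G)⁆ ≤ Subgroup.center G)
    (hpow : ∀ x ∈ H, ∃ k, 0 < k ∧ x ^ k ∈ Subgroup.center G) {z : G}
    (hz : z ∈ ⁅H, (⊤ : Subgroup G)⁆) : IsOfFinOrder z := by
  rw [Subgroup.commutator_def] at hz
  induction hz using Subgroup.closure_induction with
  | mem _ hc =>
    obtain ⟨x, hx, y, -, rfl⟩ := hc
    have hxy : ⁅x, y⁆ ∈ Subgroup.center G :=
      hcen (Subgroup.commutator_mem_commutator hx (Subgroup.mem_top y))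
    obtain ⟨k, hk, hxk⟩ := hpow x hx
    refine isOfFinOrder_iff_pow_eq_one.mpr ⟨k, hk, ?_⟩
    rw [← commutatorElement_pow_left (Subgroup.mem_center_iff.mp hxy x),
      commutatorElement_eq_one_iff_commute]
    exact (Subgroup.mem_center_iff.mp hxk y).symm
  | one => exact IsOfFinOrder.one
  | mul a b ha hb hao hbo =>
    rw [← Subgroup.commutator_def] at ha hb
    exact Commute.isOfFinOrder_mul (Subgroup.mem_center_iff.mp (hcen ha) b).symm hao hbo
  | inv a _ hao => exact hao.inv

theorem isMulTorsion_of_isMulTorsion_quotient_lowerCentralSeries {n : ℕ}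
    (hG : (⊤ : Subgroup G).lowerCentralSeries (n + 2) = ⊥)
    (hQ : IsMulTorsion (G ⧸ (⊤ : Subgroup G).lowerCentralSeries (n + 1))) :
    IsMulTorsion G := by
  set N := (⊤ : Subgroup G).lowerCentralSeries (n + 1)
  have hcen : N ≤ Subgroup.center G :=
    Subgroup.commutator_top_right_eq_bot_iff_le_center.mp hG
  have hpow : ∀ x ∈ (⊤ : Subgroup G).lowerCentralSeries n,
      ∃ k, 0 < k ∧ x ^ k ∈ Subgroup.center G := by
    intro x _
    obtain ⟨k, hk, hxk⟩ := (hQ x).exists_pow_eq_one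
    exact ⟨k, hk, hcen ((QuotientGroup.eq_one_iff _).mp (by rwa [QuotientGroup.mk_pow]))⟩
  refine IsMulTorsion.extension_closed (QuotientGroup.ker_mk' N).symm hQ fun z => ?_
  exact Submonoid.isOfFinOrder_coe.mp (isOfFinOrder_of_mem_commutator_top hcen hpow z.2)

theorem isMulTorsion_of_lowerCentralSeries_eq_bot (n : ℕ)
    (hG : (⊤ : Subgroup G).lowerCentralSeries (n + 1) = ⊥)
    (hab : IsMulTorsion (Abelianization G)) : IsMulTorsion G := by
  induction n generalizing G with
  | zero =>
    refine IsMulTorsion.extension_closed (Abelianization.ker_of G).symm hab fun z => ?_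
    have : (z : G) = 1 := Subgroup.mem_bot.mp (hG ▸ z.2)
    exact Submonoid.isOfFinOrder_coe.mp (this ▸ IsOfFinOrder.one)
  | succ n ih =>
    set N := (⊤ : Subgroup G).lowerCentralSeries (n + 1)
    have hsurj : Function.Surjective (QuotientGroup.mk' N) := QuotientGroup.mk'_surjective N
    refine isMulTorsion_of_isMulTorsion_quotient_lowerCentralSeries hG (ih ?_ ?_)
    · rw [← Subgroup.map_top_of_surjective _ hsurj, ← Subgroup.map_lowerCentralSeries,
        Subgroup.map_eq_bot_iff, QuotientGroup.ker_mk']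
    · refine hab.of_surjective (f := Abelianization.map (QuotientGroup.mk' N)) fun q => ?_
      obtain ⟨q, rfl⟩ := QuotientGroup.mk_surjective q
      obtain ⟨g, rfl⟩ := hsurj q
      exact ⟨Abelianization.of g, Abelianization.map_of _ _⟩

theorem Group.IsNilpotent.isMulTorsion_of_isMulTorsion_abelianization [Group.IsNilpotent G]
    (hab : IsMulTorsion (Abelianization G)) : IsMulTorsion G := by
  obtain ⟨n, hn⟩ := Subgroup.nilpotent_iff_lowerCentralSeries.mp ‹Group.IsNilpotent G›
  refine isMulTorsion_of_lowerCentralSeries_eq_bot n ?_ hab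
  exact eq_bot_iff.mpr (hn ▸ Subgroup.lowerCentralSeries_antitone _ n.le_succ)

theorem exists_addMonoidHom_real_eq_one {A : Type*} [AddCommGroup A] {a : A}
    (ha : ¬IsOfFinAddOrder a) : ∃ φ : A →+ ℝ, φ a = 1 := by
  obtain ⟨φ, hφ⟩ := (Module.Baer.of_divisible ℝ).extension_property_addMonoidHom
    (zmultiplesHom A a) (injective_zsmul_iff_not_isOfFinAddOrder.mpr ha) (zmultiplesHom ℝ 1)
  exact ⟨φ, by simpa using DFunLike.congr_fun hφ 1⟩

theorem isMulTorsion_abelianization_of_forall_monoidHom_real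
    (h : ∀ (φ : G →* Multiplicative ℝ) (g : G), φ g = 1) : IsMulTorsion (Abelianization G) := by
  intro x
  by_contra hx
  obtain ⟨g, rfl⟩ := QuotientGroup.mk_surjective x
  obtain ⟨ψ, hψ⟩ := exists_addMonoidHom_real_eq_one (isOfFinAddOrder_ofMul_iff.not.mpr hx)
  have hψg : ψ (Additive.ofMul (Abelianization.of g)) = 0 :=
    congrArg Multiplicative.toAdd (h ((AddMonoidHom.toMultiplicative ψ).comp Abelianization.of) g)
  exact one_ne_zero (hψ.symm.trans hψg)

end Torsion

theorem not_loxodromicWith_of_isOfFinOrder {G α : Type*} [Group G] {d : α → α → ℝ}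
    {act : G → α → α} {g : G} (hg : IsOfFinOrder g) : ¬LoxodromicWith d act g := by
  rintro ⟨x, A, B, hA, -, hqi⟩
  obtain ⟨k, hk, hgk⟩ := hg.exists_pow_eq_one
  obtain ⟨m, hm⟩ := exists_nat_gt (2 * A * B)
  -- The orbit returns to `x` at time `k * m`, where the lower bound `k * m / A - B` exceeds `B`.
  have hret : act (g ^ ((k * m : ℕ) : ℤ)) x = act (g ^ (0 : ℤ)) x := by
    rw [zpow_natCast, pow_mul, hgk, one_pow, zpow_zero]
  have hlow := (hqi (k * m : ℕ) 0).1
  have hupp := (hqi 0 0).2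
  simp only [hret, zdist, sub_zero, sub_self, abs_zero, mul_zero, zero_add, Int.cast_natCast,
    Int.cast_zero, Nat.abs_cast] at hlow hupp
  have hkm : (m : ℝ) ≤ (k * m : ℕ) := by exact_mod_cast Nat.le_mul_of_pos_left m hk
  have hbound := hlow.trans hupp
  rw [sub_le_iff_le_add, div_le_iff₀ (by positivity)] at hbound
  nlinarith

theorem isQIEmbWith_zdist_of_dist_eq_mul {α : Type*} {d : α → α → ℝ} {f : ℤ → α} {c : ℝ}
    (hc : 0 < c) (hf : ∀ m n, d (f m) (f n) = c * zdist m n) : IsQIEmbWith zdist d f := by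
  have hA : 1 ≤ max c c⁻¹ := by
    rcases le_total 1 c with h | h
    · exact h.trans (le_max_left _ _)
    · exact (one_le_inv₀ hc |>.mpr h).trans (le_max_right _ _)
  refine ⟨max c c⁻¹, 0, hA, le_rfl, fun m n => ⟨?_, ?_⟩⟩
  · have hz : 0 ≤ zdist m n := abs_nonneg _
    have hcA : 1 ≤ c * max c c⁻¹ :=
      (mul_inv_cancel₀ hc.ne').symm.le.trans (mul_le_mul_of_nonneg_left (le_max_right _ _) hc.le)
    rw [hf, sub_zero, div_le_iff₀ (by positivity)]
    nlinarith
  · rw [hf, add_zero]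
    exact mul_le_mul_of_nonneg_right (le_max_left _ _) (abs_nonneg _)

theorem IsGeodesicSeg.dist_add_dist_of_mem {X : Type*} [MetricSpace X] {x y p : X} {f : ℝ → X}
    (hf : IsGeodesicSeg x y f) (hp : p ∈ geodSet x y f) :
    dist x p + dist p y = dist x y := by
  obtain ⟨s, hs, rfl⟩ := hp
  have e1 := hf.2.2 0 ⟨le_rfl, dist_nonneg⟩ s hs
  have e2 := hf.2.2 s hs _ ⟨dist_nonneg, le_rfl⟩
  rw [hf.1] at e1
  rw [hf.2.1] at e2
  rw [e1, e2, abs_of_nonpos (by linarith [hs.1]), abs_of_nonpos (by linarith [hs.2])]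
  ring

theorem Real.mem_uIcc_iff_dist_add_dist {a b u : ℝ} :
    u ∈ Set.uIcc a b ↔ dist a u + dist u b = dist a b := by
  rw [dist_add_dist_eq_iff, ← mem_segment_iff_wbtw, segment_eq_uIcc]

theorem Real.eq_of_mem_uIcc_of_dist_eq {a b u v : ℝ} (hu : u ∈ Set.uIcc a b)
    (hv : v ∈ Set.uIcc a b) (h : dist a u = dist a v) : u = v := by
  rw [Set.mem_uIcc] at hu hv
  rw [Real.dist_eq, Real.dist_eq] at h
  rcases abs_cases (a - u) with ⟨hau, -⟩ | ⟨hau, -⟩ <;>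
  rcases abs_cases (a - v) with ⟨hav, -⟩ | ⟨hav, -⟩ <;>
  rcases hu with hu | hu <;> rcases hv with hv | hv <;> linarith

namespace ULift

theorem geodSet_real_eq {x y : ULift.{u} ℝ} {f : ℝ → ULift.{u} ℝ} (hf : IsGeodesicSeg x y f) :
    geodSet x y f = ULift.down ⁻¹' Set.uIcc x.down y.down := by
  ext p
  refine ⟨fun hp => Real.mem_uIcc_iff_dist_add_dist.mpr (hf.dist_add_dist_of_mem hp),
    fun hp => ?_⟩
  -- The geodesic passes through a point at distance `dist x p` from `x`, which must be `p`.
  have hs : dist x p ∈ Set.Icc 0 (dist x y) := ⟨dist_nonneg, Real.dist_left_le_of_mem_uIcc hp⟩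
  have hfs : f (dist x p) ∈ geodSet x y f := ⟨_, hs, rfl⟩
  refine ⟨dist x p, hs, ULift.ext _ _ (Real.eq_of_mem_uIcc_of_dist_eq
    (Real.mem_uIcc_iff_dist_add_dist.mpr (hf.dist_add_dist_of_mem hfs)) hp ?_)⟩
  have := hf.2.2 0 ⟨le_rfl, dist_nonneg⟩ _ hs
  rw [hf.1, zero_sub, abs_neg, abs_of_nonneg dist_nonneg] at this
  exact this

theorem geodesicSpace_real : GeodesicSpace (ULift.{u} ℝ) := by
  intro x y
  set σ : ℝ := if x.down ≤ y.down then 1 else -1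
  have hσ : |σ| = 1 := by simp only [σ]; split_ifs <;> simp
  refine ⟨fun t => ⟨x.down + t * σ⟩, ULift.ext _ _ (by simp), ULift.ext _ _ ?_, fun s _ t _ => ?_⟩
  · change x.down + |x.down - y.down| * σ = y.down
    by_cases hxy : x.down ≤ y.down
    · simp [σ, hxy, abs_of_nonpos (sub_nonpos.mpr hxy)]
    · simp [σ, hxy, abs_of_pos (sub_pos.mpr (not_le.mp hxy))]
  · change |x.down + s * σ - (x.down + t * σ)| = |s - t|
    rw [add_sub_add_left_eq_sub, ← sub_mul, abs_mul, hσ, mul_one]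

theorem ripsHyperbolic_real : RipsHyperbolic (ULift.{u} ℝ) 0 := by
  intro x y z fxy fyz fxz hxy hyz hxz
  simp only [geodSet_real_eq hxy, geodSet_real_eq hyz, geodSet_real_eq hxz, ← Set.preimage_union]
  refine ⟨fun p hp => ⟨p, ?_, (dist_self p).le⟩, fun p hp => ⟨p, ?_, (dist_self p).le⟩,
    fun p hp => ⟨p, ?_, (dist_self p).le⟩⟩
  · rw [Set.union_comm, Set.uIcc_comm y.down]
    exact Set.uIcc_subset_uIcc_union_uIcc hp
  · rw [Set.uIcc_comm x.down]
    exact Set.uIcc_subset_uIcc_union_uIcc hp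
  · exact Set.uIcc_subset_uIcc_union_uIcc hp

end ULift

section Translation

variable {G : Type*} [Group G]

def translationAction (φ : G →* Multiplicative ℝ) (g : G) (x : ULift.{u} ℝ) : ULift.{u} ℝ :=
  ⟨(φ g).toAdd + x.down⟩

theorem isIsomAction_translationAction (φ : G →* Multiplicative ℝ) :
    IsIsomAction G (ULift.{u} ℝ) (translationAction φ) where
  act_one x := ULift.ext _ _ (by simp [translationAction])
  act_mul g h x := ULift.ext _ _ (by simp [translationAction, add_assoc])
  isometry g x y := by
    change |(φ g).toAdd + x.down - ((φ g).toAdd + y.down)| = |x.down - y.down|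
    rw [add_sub_add_left_eq_sub]

def translationHypSpace (φ : G →* Multiplicative ℝ) : GrpActHypSpace.{u} G where
  carrier := ULift.{u} ℝ
  act := translationAction φ
  isIsomAction := isIsomAction_translationAction φ
  δ := 0
  δ_nonneg := le_rfl
  geodesic := ULift.geodesicSpace_real
  rips := ULift.ripsHyperbolic_real

theorem loxodromicWith_translationAction {φ : G →* Multiplicative ℝ} {g : G} (hg : φ g ≠ 1) :
    LoxodromicWith (fun x y : ULift.{u} ℝ => dist x y) (translationAction φ) g := by
  have hr : 0 < |(φ g).toAdd| := abs_pos.mpr (toAdd_eq_zero.not.mpr hg)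
  refine ⟨⟨0⟩, isQIEmbWith_zdist_of_dist_eq_mul hr fun m n => ?_⟩
  change |(φ (g ^ m)).toAdd + 0 - ((φ (g ^ n)).toAdd + 0)| = |(φ g).toAdd| * |(m : ℝ) - n|
  rw [φ.map_zpow, φ.map_zpow, toAdd_zpow, toAdd_zpow, ← abs_mul, zsmul_eq_mul, zsmul_eq_mul]
  ring_nf

end Translation

/-- a nilpotent group has property (NL) iff every homomorphism to the
additive group `ℝ` is trivial. -/
theorem stmt_7 {G : Type uG} [Group G] [Group.IsNilpotent G] :
    PropNL.{uX, uG} G ↔ ∀ (φ : G →* Multiplicative ℝ) (g : G), φ g = 1 := by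
  constructor
  · intro hNL φ g
    by_contra hg
    exact hNL (translationHypSpace φ) g (loxodromicWith_translationAction hg)
  · intro hφ A g
    exact not_loxodromicWith_of_isOfFinOrder
      (Group.IsNilpotent.isMulTorsion_of_isMulTorsion_abelianization
        (isMulTorsion_abelianization_of_forall_monoidHom_real hφ) g)
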